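/- arXiv:2501.03422 — 2 statements merged into one kernel-verified Lean document; each statement's English description precedes it below -/
import Mathlib

section
/- Let O be a discrete valuation ring with uniformizer π whose residue field k = O/(π) is finite with q elements, let M be a free O-module of rank n, and let r be an integer with 0 < r ≤ n. Then the set of submodules N ≤ M such that the O-module M/N is isomorphic to k^r is finite, and its cardinality c satisfies c · ∏_{i=1}^{r} (q^i − 1) = ∏_{i=1}^{r} (q^{n−r+i} − 1); that is, c equals the Gaussian binomial coefficient counting the points of the Grassmannian Gr_{n−r}(k^n). -/
/-!
Count the surjections `f : M → k^r` in two ways. Such an `f` is the same as its kernel `N`, a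
submodule with `M ⧸ N ≅ k^r`, together with an isomorphism `M ⧸ N ≃ k^r`, and these isomorphisms
form a torsor under `GL_r(k)`; so `c · #GL_r(k)` is the number of surjections. Through a basis of
`M`, a surjection is an `n`-tuple of vectors spanning `k^r` (over `O`, equivalently over `k`),
i.e. an `n × r` matrix of rank `r`, whose `r` columns are linearly independent vectors of `k^n`.
Hence `c · ∏_{i<r} (q^r - q^i) = ∏_{i<r} (q^n - q^i)`, and cancelling `∏_{i<r} q^i` gives the
Gaussian binomial.
-/

open Finset

section QuotientsIsomorphicTo

variable {R M Q : Type*} [Ring R] [AddCommGroup M] [Module R M] [AddCommGroup Q] [Module R Q]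

noncomputable def Submodule.surjectionsWithKerEquiv (N : Submodule R M) :
    {f : {f : M →ₗ[R] Q // Function.Surjective f} // LinearMap.ker f.1 = N} ≃
      ((M ⧸ N) ≃ₗ[R] Q) where
  toFun f := (Submodule.quotEquivOfEq _ _ f.2.symm).trans (f.1.1.quotKerEquivOfSurjective f.1.2)
  invFun e := ⟨⟨e.toLinearMap ∘ₗ N.mkQ, e.surjective.comp N.mkQ_surjective⟩, by
    rw [LinearEquiv.ker_comp, Submodule.ker_mkQ]⟩
  left_inv _ := rfl
  right_inv e := by
    ext x
    induction x using Submodule.Quotient.induction_on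
    rfl

noncomputable def surjectiveLinearMapEquivProd :
    {f : M →ₗ[R] Q // Function.Surjective f} ≃
      {N : Submodule R M | Nonempty ((M ⧸ N) ≃ₗ[R] Q)} × (Q ≃ₗ[R] Q) :=
  let ker : {f : M →ₗ[R] Q // Function.Surjective f} →
      {N : Submodule R M | Nonempty ((M ⧸ N) ≃ₗ[R] Q)} :=
    fun f => ⟨LinearMap.ker f.1, ⟨f.1.quotKerEquivOfSurjective f.2⟩⟩
  let torsor (N : {N : Submodule R M | Nonempty ((M ⧸ N) ≃ₗ[R] Q)}) :
      ((M ⧸ N.1) ≃ₗ[R] Q) ≃ (Q ≃ₗ[R] Q) :=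
    { toFun := N.2.some.symm.trans
      invFun := N.2.some.trans
      left_inv := fun e => by ext; simp
      right_inv := fun e => by ext; simp }
  (Equiv.sigmaFiberEquiv ker).symm.trans <|
    (Equiv.sigmaCongrRight fun N =>
      ((Equiv.subtypeEquivRight fun _ => Subtype.ext_iff).trans
        N.1.surjectionsWithKerEquiv).trans (torsor N)).trans
      (Equiv.sigmaEquivProd _ _)

end QuotientsIsomorphicTo

theorem Module.Basis.surjective_constr_iff {ι R M Q : Type*} [CommRing R] [AddCommGroup M]
    [Module R M] [AddCommGroup Q] [Module R Q] (b : Module.Basis ι R M) (v : ι → Q) :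
    Function.Surjective (b.constr ℕ v) ↔ Submodule.span R (Set.range v) = ⊤ := by
  rw [← LinearMap.range_eq_top, b.constr_range]

theorem Matrix.span_row_eq_top_iff_linearIndependent_col {K m n : Type*} [Field K]
    [Fintype m] [Fintype n] (A : Matrix m n K) :
    Submodule.span K (Set.range A.row) = ⊤ ↔ LinearIndependent K A.col := by
  rw [Submodule.eq_top_iff_finrank_eq, linearIndependent_iff_card_eq_finrank_span,
    Module.finrank_fintype_fun_eq_card, ← A.rank_eq_finrank_span_row,
    A.rank_eq_finrank_span_cols, eq_comm]
  rfl

theorem card_spanning_families (K : Type*) [Field K] [Fintype K] {n r : ℕ} (hrn : r ≤ n) :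
    Nat.card {v : Fin n → Fin r → K // Submodule.span K (Set.range v) = ⊤} =
      ∏ i : Fin r, (Fintype.card K ^ n - Fintype.card K ^ (i : ℕ)) := by
  have hspan (v : Fin n → Fin r → K) :
      Submodule.span K (Set.range v) = ⊤ ↔ LinearIndependent K (Equiv.piComm _ v) :=
    (Matrix.of v).span_row_eq_top_iff_linearIndependent_col
  rw [Nat.card_congr (Equiv.subtypeEquiv (q := fun w : Fin r → Fin n → K => LinearIndependent K w)
    (Equiv.piComm _) hspan), card_linearIndependent, Module.finrank_fintype_fun_eq_card,
    Fintype.card_fin]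
  rwa [Module.finrank_fintype_fun_eq_card, Fintype.card_fin]

theorem card_surjective_linearMap {R K M : Type*} [CommRing R] [Field K] [Fintype K] [Algebra R K]
    (hK : Function.Surjective (algebraMap R K)) [AddCommGroup M] [Module R M] {n r : ℕ}
    (b : Module.Basis (Fin n) R M) (hrn : r ≤ n) :
    Nat.card {f : M →ₗ[R] (Fin r → K) // Function.Surjective f} =
      ∏ i : Fin r, (Fintype.card K ^ n - Fintype.card K ^ (i : ℕ)) := by
  have hspan (v : Fin n → Fin r → K) :
      Submodule.span K (Set.range v) = ⊤ ↔ Function.Surjective (b.constr ℕ v) := by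
    rw [b.surjective_constr_iff, ← Submodule.restrictScalars_span R K hK,
      Submodule.restrictScalars_eq_top_iff]
  rw [← Nat.card_congr ((b.constr ℕ).toEquiv.subtypeEquiv hspan), card_spanning_families K hrn]

def LinearEquiv.extendScalarsOfSurjectiveEquiv {R S M N : Type*} [CommSemiring R] [Semiring S]
    [Algebra R S] [AddCommMonoid M] [AddCommMonoid N] [Module R M] [Module S M]
    [IsScalarTower R S M] [Module R N] [Module S N] [IsScalarTower R S N]
    (h : Function.Surjective (algebraMap R S)) :
    (M ≃ₗ[R] N) ≃ (M ≃ₗ[S] N) where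
  toFun := extendScalarsOfSurjective h
  invFun := restrictScalars R
  left_inv _ := rfl
  right_inv _ := rfl

theorem card_linearEquiv_pi (K : Type*) [Field K] [Fintype K] (r : ℕ) :
    Nat.card ((Fin r → K) ≃ₗ[K] (Fin r → K)) =
      ∏ i : Fin r, (Fintype.card K ^ r - Fintype.card K ^ (i : ℕ)) := by
  rw [← Nat.card_congr (Matrix.GeneralLinearGroup.toLin.trans
    (LinearMap.GeneralLinearGroup.generalLinearEquiv K (Fin r → K))).toEquiv,
    Matrix.card_GL_field]

theorem Nat.prod_range_pow_sub_pow (q : ℕ) {r m : ℕ} (h : r ≤ m) :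
    ∏ i ∈ range r, (q ^ m - q ^ i) =
      (∏ i ∈ range r, q ^ i) * ∏ i ∈ range r, (q ^ (m - r + i + 1) - 1) := by
  rw [← prod_range_reflect (fun i => q ^ (m - r + i + 1) - 1), ← prod_mul_distrib]
  refine prod_congr rfl fun i hi => ?_
  rw [mem_range] at hi
  rw [Nat.mul_sub, mul_one, ← pow_add]
  congr 2
  omega

open Finset in
theorem hecke_modifications_count_grassmannian_general
    {O : Type*} [CommRing O] [IsDomain O] [IsDiscreteValuationRing O]
    (π : O) (hπ : Irreducible π)
    [Finite (O ⧸ Ideal.span {π})] (q : ℕ) (hq : Nat.card (O ⧸ Ideal.span {π}) = q)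
    {M : Type*} [AddCommGroup M] [Module O M]
    (n : ℕ) (b : Module.Basis (Fin n) O M)
    (r : ℕ) (hrn : r ≤ n) :
    {N : Submodule O M | Nonempty ((M ⧸ N) ≃ₗ[O] (Fin r → O ⧸ Ideal.span {π}))}.Finite ∧
    Nat.card {N : Submodule O M | Nonempty ((M ⧸ N) ≃ₗ[O] (Fin r → O ⧸ Ideal.span {π}))} *
        ∏ i ∈ Finset.range r, (q ^ (i + 1) - 1) =
      ∏ i ∈ Finset.range r, (q ^ (n - r + i + 1) - 1) := by
  have := PrincipalIdealRing.isMaximal_of_irreducible hπ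
  let : Field (O ⧸ Ideal.span {π}) := Ideal.Quotient.field _
  let := Fintype.ofFinite (O ⧸ Ideal.span {π})
  have hk : Function.Surjective (algebraMap O (O ⧸ Ideal.span {π})) :=
    Ideal.Quotient.mk_surjective
  have hcard : Fintype.card (O ⧸ Ideal.span {π}) = q := by rwa [← Nat.card_eq_fintype_card]
  have e := surjectiveLinearMapEquivProd (R := O) (M := M) (Q := Fin r → O ⧸ Ideal.span {π})
  have hcount := Nat.card_congr e
  rw [card_surjective_linearMap hk b hrn, Nat.card_prod,
    Nat.card_congr (LinearEquiv.extendScalarsOfSurjectiveEquiv hk), card_linearEquiv_pi, hcard,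
    Fin.prod_univ_eq_prod_range (fun i => q ^ n - q ^ i),
    Fin.prod_univ_eq_prod_range (fun i => q ^ r - q ^ i),
    Nat.prod_range_pow_sub_pow q hrn, Nat.prod_range_pow_sub_pow q le_rfl] at hcount
  refine ⟨?_, ?_⟩
  · have : Finite (M →ₗ[O] (Fin r → O ⧸ Ideal.span {π})) :=
      Finite.of_equiv _ (b.constr ℕ).toEquiv
    have := Finite.of_equiv _ e
    exact Set.finite_coe_iff.mp
      (Finite.prod_left ((Fin r → O ⧸ Ideal.span {π}) ≃ₗ[O] (Fin r → O ⧸ Ideal.span {π})))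
  · have hq : 0 < ∏ i ∈ range r, q ^ i :=
      prod_pos fun i _ => pow_pos (hcard ▸ Fintype.card_pos) i
    simp only [Nat.sub_self, zero_add] at hcount
    rw [mul_left_comm] at hcount
    exact Nat.eq_of_mul_eq_mul_left hq hcount.symm

open Finset in
/-- Let `O` be a DVR with uniformizer `π` whose residue field `k = O⧸(π)`
is finite with `q` elements, `M` a free `O`-module of rank `n`, and `0 < r ≤ n`. Then the
set of submodules `N ≤ M` with `M⧸N ≅ k^r` is finite, and its cardinality `c` satisfies
`c • ∏_{i=1}^{r} (q^i - 1) = ∏_{i=1}^{r} (q^{n-r+i} - 1)`, i.e. `c` is the Gaussian binomial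
coefficient counting the points of the Grassmannian `Gr_{n-r}(k^n)`. -/
theorem hecke_modifications_count_grassmannian
    {O : Type*} [CommRing O] [IsDomain O] [IsDiscreteValuationRing O]
    (π : O) (hπ : Irreducible π)
    [Finite (O ⧸ Ideal.span {π})] (q : ℕ) (hq : Nat.card (O ⧸ Ideal.span {π}) = q)
    {M : Type*} [AddCommGroup M] [Module O M]
    (n : ℕ) (b : Module.Basis (Fin n) O M)
    (r : ℕ) (hr : 0 < r) (hrn : r ≤ n) :
    {N : Submodule O M | Nonempty ((M ⧸ N) ≃ₗ[O] (Fin r → O ⧸ Ideal.span {π}))}.Finite ∧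
    Nat.card {N : Submodule O M | Nonempty ((M ⧸ N) ≃ₗ[O] (Fin r → O ⧸ Ideal.span {π}))} *
        ∏ i ∈ Finset.range r, (q ^ (i + 1) - 1) =
      ∏ i ∈ Finset.range r, (q ^ (n - r + i + 1) - 1) :=
  hecke_modifications_count_grassmannian_general π hπ q hq n b r hrn
end

section
/- Let O be a discrete valuation ring with uniformizer π, residue field k = O/(π), and fraction field K. Let N be a free O-module of rank n, let ι : N → K ⊗_O N be the canonical map (which is injective), and let r be an integer with 0 < r ≤ n. Then the set of O-submodules M of K ⊗_O N that contain ι(N) and satisfy that the O-module M/ι(N) is isomorphic to k^r is in bijection with the set of r-dimensional k-linear subspaces of N/πN; the bijection sends M to the image of π·M in ι(N)/π·ι(N) ≅ N/πN. -/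
/-!
Multiplication by `π` is invertible on `K ⊗ N`, so `M ↦ T = ι⁻¹(π M)` identifies the lattices
`ι(N) ⊆ M` with `π M ⊆ ι(N)` with the submodules `π N ⊆ T ⊆ N`, i.e. with the submodules of
`N ⧸ π N`; the inverse is `T ↦ π⁻¹ ι(T)`. Multiplication by `π` carries `M ⧸ ι(N)` isomorphically
onto `ι(T) ⧸ ι(π N) ≅ T ⧸ π N`. Finally `M ⧸ ι(N) ≅ k^r` is killed by `π`, which forces
`π M ⊆ ι(N)`.
-/

open Pointwise

namespace Submodule

variable {R : Type*} [CommRing R] {M M' : Type*} [AddCommGroup M] [Module R M]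
  [AddCommGroup M'] [Module R M']

theorem ideal_span_singleton_smul_eq_map_lsmul (a : R) (S : Submodule R M) :
    Ideal.span {a} • S = S.map (LinearMap.lsmul R M a) := by
  rw [ideal_span_singleton_smul]
  rfl

noncomputable def quotientSubmoduleOfEquivOfInjective (f : M →ₗ[R] M')
    (hf : Function.Injective f) {T P : Submodule R M} {T' P' : Submodule R M'}
    (hT : T.map f = T') (hP : P.map f = P') :
    (T ⧸ P.submoduleOf T) ≃ₗ[R] (T' ⧸ P'.submoduleOf T') :=
  Quotient.equiv _ _ ((equivMapOfInjective f hf T).trans (LinearEquiv.ofEq _ _ hT)) <| by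
    subst hT hP
    ext x
    obtain ⟨t, rfl⟩ := (equivMapOfInjective f hf T).surjective x
    simp [submoduleOf, mem_map_equiv, hf.eq_iff]

noncomputable def quotientSubmoduleOfEquivMapMkQ (P T : Submodule R M) :
    (T ⧸ P.submoduleOf T) ≃ₗ[R] T.map P.mkQ :=
  (quotEquivOfEq _ _ (by rw [LinearMap.ker_comp, ker_mkQ]; rfl)).trans
    ((P.mkQ ∘ₗ T.subtype).quotKerEquivRange.trans
      (LinearEquiv.ofEq _ _ (by rw [LinearMap.range_comp, range_subtype])))

theorem ideal_span_singleton_smul_le_of_mem_annihilator {a : R} {T L : Submodule R M}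
    (ha : a ∈ Module.annihilator R (T ⧸ L.submoduleOf T)) : Ideal.span {a} • T ≤ L := by
  rw [ideal_span_singleton_smul]
  rintro _ ⟨t, ht, rfl⟩
  have h := Module.mem_annihilator.mp ha (Quotient.mk ⟨t, ht⟩)
  rwa [← Quotient.mk_smul, Quotient.mk_eq_zero] at h

end Submodule

theorem LinearMap.bijective_lsmul_of_algebraMap_ne_zero {R K V : Type*} [CommRing R] [Field K]
    [Algebra R K] [AddCommGroup V] [Module R V] [Module K V] [IsScalarTower R K V] {a : R}
    (ha : algebraMap R K a ≠ 0) : Function.Bijective (LinearMap.lsmul R V a) := by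
  have : ⇑(LinearMap.lsmul R V a) = fun v => algebraMap R K a • v :=
    funext fun v => (algebraMap_smul K a v).symm
  rw [this]
  exact ha.isUnit.smul_bijective

theorem Module.mem_annihilator_pi_quotient_span_singleton {R ι : Type*} [CommRing R] (a : R) :
    a ∈ Module.annihilator R (ι → R ⧸ Ideal.span {a}) := by
  rw [Module.annihilator_pi, Ideal.mem_iInf]
  intro
  rw [Ideal.annihilator_quotient]
  exact Ideal.mem_span_singleton_self a

namespace HeckeModification

open Submodule

variable {R : Type*} [CommRing R] {N V : Type*} [AddCommGroup N] [Module R N]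
  [AddCommGroup V] [Module R V] (ι : N →ₗ[R] V) (a : R)

def toResidue (M : Submodule R V) : Submodule R (N ⧸ (Ideal.span {a} • ⊤ : Submodule R N)) :=
  ((Ideal.span {a} • M).comap ι).map (mkQ _)

def ofResidue (W : Submodule R (N ⧸ (Ideal.span {a} • ⊤ : Submodule R N))) : Submodule R V :=
  ((W.comap (mkQ _)).map ι).comap (LinearMap.lsmul R V a)

variable {ι a}

theorem range_le_ofResidue (W : Submodule R (N ⧸ (Ideal.span {a} • ⊤ : Submodule R N))) :
    LinearMap.range ι ≤ ofResidue ι a W := by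
  rintro _ ⟨x, rfl⟩
  refine ⟨a • x, le_comap_mkQ _ W ?_, map_smul ι a x⟩
  exact smul_mem_smul (Ideal.mem_span_singleton_self a) mem_top

theorem smul_ofResidue (ha : Function.Surjective (LinearMap.lsmul R V a))
    (W : Submodule R (N ⧸ (Ideal.span {a} • ⊤ : Submodule R N))) :
    Ideal.span {a} • ofResidue ι a W = (W.comap (mkQ _)).map ι := by
  rw [ideal_span_singleton_smul_eq_map_lsmul, ofResidue, map_comap_eq_of_surjective ha]

theorem toResidue_ofResidue (ha : Function.Surjective (LinearMap.lsmul R V a))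
    (hι : Function.Injective ι) (W : Submodule R (N ⧸ (Ideal.span {a} • ⊤ : Submodule R N))) :
    toResidue ι a (ofResidue ι a W) = W := by
  rw [toResidue, smul_ofResidue ha, comap_map_eq_of_injective hι,
    map_comap_eq_of_surjective (mkQ_surjective _)]

theorem ofResidue_toResidue (ha : Function.Injective (LinearMap.lsmul R V a))
    {M : Submodule R V} (hle : LinearMap.range ι ≤ M)
    (hsmul : Ideal.span {a} • M ≤ LinearMap.range ι) :
    ofResidue ι a (toResidue ι a M) = M := by
  have hT : (Ideal.span {a} • ⊤ : Submodule R N) ≤ (Ideal.span {a} • M).comap ι := by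
    rw [← map_le_iff_le_comap, map_smul'', Submodule.map_top]
    exact smul_mono_right _ hle
  rw [ofResidue, toResidue, comap_map_eq, ker_mkQ, sup_eq_left.mpr hT, map_comap_eq,
    inf_eq_right.mpr hsmul, ideal_span_singleton_smul_eq_map_lsmul,
    comap_map_eq_of_injective ha]

-- `M ⧸ ι(N) ≅ a M ⧸ a ι(N) = ι(T) ⧸ ι(a N) ≅ T ⧸ a N ≅ W`, where `T` is the preimage of `W` in `N`.
noncomputable def quotientEquivOfResidue (ha : Function.Bijective (LinearMap.lsmul R V a))
    (hι : Function.Injective ι) (W : Submodule R (N ⧸ (Ideal.span {a} • ⊤ : Submodule R N))) :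
    (ofResidue ι a W ⧸ (LinearMap.range ι).submoduleOf (ofResidue ι a W)) ≃ₗ[R] W :=
  have hM : (ofResidue ι a W).map (LinearMap.lsmul R V a) = (W.comap (mkQ _)).map ι := by
    rw [← ideal_span_singleton_smul_eq_map_lsmul, smul_ofResidue ha.surjective]
  have hL : (LinearMap.range ι).map (LinearMap.lsmul R V a) =
      (Ideal.span {a} • ⊤ : Submodule R N).map ι := by
    rw [← ideal_span_singleton_smul_eq_map_lsmul, map_smul'', Submodule.map_top]
  (quotientSubmoduleOfEquivOfInjective _ ha.injective hM hL).trans <|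
    (quotientSubmoduleOfEquivOfInjective ι hι rfl rfl).symm.trans <|
      (quotientSubmoduleOfEquivMapMkQ _ _).trans <|
        LinearEquiv.ofEq _ _ (map_comap_eq_of_surjective (mkQ_surjective _) W)

theorem bijOn_toResidue {Q : Type*} [AddCommGroup Q] [Module R Q]
    (ha : Function.Bijective (LinearMap.lsmul R V a)) (hι : Function.Injective ι)
    (hQ : a ∈ Module.annihilator R Q) :
    Set.BijOn (toResidue ι a)
      {M | LinearMap.range ι ≤ M ∧
        Nonempty ((M ⧸ (LinearMap.range ι).submoduleOf M) ≃ₗ[R] Q)}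
      {W | Nonempty (W ≃ₗ[R] Q)} := by
  have hsmul (M : Submodule R V) :
      Nonempty ((M ⧸ (LinearMap.range ι).submoduleOf M) ≃ₗ[R] Q) →
      Ideal.span {a} • M ≤ LinearMap.range ι := fun ⟨e⟩ =>
    ideal_span_singleton_smul_le_of_mem_annihilator (e.annihilator_eq ▸ hQ)
  refine Set.InvOn.bijOn (f' := ofResidue ι a)
    ⟨fun M ⟨hle, hM⟩ => ofResidue_toResidue ha.injective hle (hsmul M hM),
      fun W _ => toResidue_ofResidue ha.surjective hι W⟩ ?_ ?_
  · rintro M ⟨hle, ⟨e⟩⟩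
    have hM := ofResidue_toResidue ha.injective hle (hsmul M ⟨e⟩)
    rw [← hM] at e
    exact ⟨(quotientEquivOfResidue ha hι _).symm.trans e⟩
  · rintro W ⟨e⟩
    exact ⟨range_le_ofResidue W, ⟨(quotientEquivOfResidue ha hι W).trans e⟩⟩

end HeckeModification

open TensorProduct in
theorem hecke_fiber_over_source_bijection_grassmannian_general
    {O : Type*} [CommRing O]
    (π : O) (hπ : Irreducible π)
    (K : Type*) [Field K] [Algebra O K] [IsFractionRing O K]
    {N : Type*} [AddCommGroup N] [Module O N]
    (n : ℕ) (b : Module.Basis (Fin n) O N)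
    (r : ℕ)
    (ι : N →ₗ[O] K ⊗[O] N) (hι : ι = TensorProduct.mk O K N 1) :
    Function.Injective ι ∧
    Set.BijOn
      (fun M : Submodule O (K ⊗[O] N) =>
        Submodule.map (Submodule.mkQ (Ideal.span {π} • (⊤ : Submodule O N)))
          (Submodule.comap ι (Ideal.span {π} • M)))
      {M : Submodule O (K ⊗[O] N) |
        LinearMap.range ι ≤ M ∧
        Nonempty
          ((@HasQuotient.Quotient (↥M) (Submodule O ↥M) (@Submodule.hasQuotient O ↥M _ M.addCommGroup _)
              (Submodule.comap M.subtype (LinearMap.range ι)))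
            ≃ₗ[O] (Fin r → O ⧸ Ideal.span {π}))}
      {W : Submodule O (N ⧸ (Ideal.span {π} • (⊤ : Submodule O N))) |
        Nonempty (W ≃ₗ[O] (Fin r → O ⧸ Ideal.span {π}))} := by
  subst hι
  have : Module.Free O N := .of_basis b
  have hinj := Module.Flat.tensorProduct_mk_injective O N K
  have hπK : algebraMap O K π ≠ 0 :=
    (map_ne_zero_iff _ (IsFractionRing.injective O K)).mpr hπ.ne_zero
  exact ⟨hinj, HeckeModification.bijOn_toResidue
    (LinearMap.bijective_lsmul_of_algebraMap_ne_zero hπK) hinj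
    (Module.mem_annihilator_pi_quotient_span_singleton π)⟩

open TensorProduct in
/-- Let `O` be a DVR with uniformizer `π`, residue field `k = O⧸(π)` and
fraction field `K`. Let `N` be a free `O`-module of rank `n`, let `ι : N → K ⊗[O] N` be the
canonical map (which is injective), and let `0 < r ≤ n`. Then the set of `O`-submodules `M`
of `K ⊗[O] N` containing `ι(N)` with `M⧸ι(N) ≅ k^r` is in bijection with the set of
`r`-dimensional subspaces of `N⧸πN` (those isomorphic to `k^r`); the bijection sends `M` to
the image of `π•M` in `ι(N)⧸π•ι(N) ≅ N⧸πN`. -/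
theorem hecke_fiber_over_source_bijection_grassmannian
    {O : Type*} [CommRing O] [IsDomain O] [IsDiscreteValuationRing O]
    (π : O) (hπ : Irreducible π)
    (K : Type*) [Field K] [Algebra O K] [IsFractionRing O K]
    {N : Type*} [AddCommGroup N] [Module O N]
    (n : ℕ) (b : Module.Basis (Fin n) O N)
    (r : ℕ) (hr : 0 < r) (hrn : r ≤ n)
    (ι : N →ₗ[O] K ⊗[O] N) (hι : ι = TensorProduct.mk O K N 1) :
    Function.Injective ι ∧
    Set.BijOn
      (fun M : Submodule O (K ⊗[O] N) =>
        Submodule.map (Submodule.mkQ (Ideal.span {π} • (⊤ : Submodule O N)))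
          (Submodule.comap ι (Ideal.span {π} • M)))
      {M : Submodule O (K ⊗[O] N) |
        LinearMap.range ι ≤ M ∧
        Nonempty
          ((@HasQuotient.Quotient (↥M) (Submodule O ↥M) (@Submodule.hasQuotient O ↥M _ M.addCommGroup _)
              (Submodule.comap M.subtype (LinearMap.range ι)))
            ≃ₗ[O] (Fin r → O ⧸ Ideal.span {π}))}
      {W : Submodule O (N ⧸ (Ideal.span {π} • (⊤ : Submodule O N))) |
        Nonempty (W ≃ₗ[O] (Fin r → O ⧸ Ideal.span {π}))} :=
  hecke_fiber_over_source_bijection_grassmannian_general π hπ K n b r ι hι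
end
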